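/- (Hummel's inequality) For every integer n ≥ 2, 11/12 < r_n + (1/2)·ln(2π) < 1, where r_n = ln( n!·e^n / (√(2πn)·n^n) ). -/
import Mathlib


open Real Nat

/-- `r_n = ln ( n! eⁿ / (√(2πn) nⁿ) )`, the logarithmic error in Stirling's formula. -/
noncomputable def stirlingError (n : ℕ) : ℝ :=
  Real.log ((n ! : ℝ) * Real.exp n / (Real.sqrt (2 * π * n) * (n : ℝ) ^ n))

lemma stirlingError_eq_log_stirlingSeq (n : ℕ) (hn : 1 ≤ n) :
    stirlingError n + (1 / 2) * Real.log (2 * π) =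
      Real.log (Stirling.stirlingSeq n) + (1 / 2) * Real.log 2 := by
  have hn0 : (0:ℝ) < n := by exact_mod_cast hn
  have hfac : (0:ℝ) < (n ! : ℝ) := by exact_mod_cast n.factorial_pos
  rw [Stirling.log_stirlingSeq_formula, stirlingError,
    Real.log_div (by positivity) (by positivity),
    Real.log_mul hfac.ne' (Real.exp_pos _).ne',
    Real.log_mul (by positivity) (by positivity), Real.log_exp, Real.log_pow,
    Real.log_sqrt (by positivity),
    Real.log_mul (by positivity) hn0.ne',
    Real.log_mul two_ne_zero Real.pi_pos.ne',
    Real.log_mul two_ne_zero hn0.ne',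
    Real.log_div hn0.ne' (Real.exp_pos 1).ne', Real.log_exp]
  ring

lemma sqrt_pi_le_stirlingSeq (n : ℕ) (hn : 1 ≤ n) :
    Real.sqrt π ≤ Stirling.stirlingSeq n := by
  obtain ⟨m, rfl⟩ := Nat.exists_eq_add_of_le hn
  refine le_of_tendsto Stirling.tendsto_stirlingSeq_sqrt_pi ?_
  filter_upwards [Filter.eventually_ge_atTop (1 + m)] with k hk
  obtain ⟨j, rfl⟩ := Nat.exists_eq_add_of_le hk
  have h := Stirling.stirlingSeq'_antitone (Nat.le_add_right m j)
  rw [show 1 + m + j = m + j + 1 from by omega, show 1 + m = m + 1 from by omega]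
  exact h

lemma log_two_gt : (2:ℝ) / 3 < Real.log 2 := by
  rw [Real.lt_log_iff_exp_lt two_pos]
  have he : Real.exp 2 < 8 := by
    have := Real.exp_one_lt_d9
    calc Real.exp 2 = Real.exp 1 ^ 2 := by rw [← Real.exp_nat_mul]; norm_num
    _ < 2.7182818286 ^ 2 := by
        exact pow_lt_pow_left₀ this (Real.exp_pos 1).le two_ne_zero
    _ < 8 := by norm_num
  have h3 : Real.exp (2/3) ^ 3 < 2 ^ 3 := by
    rw [show Real.exp (2/3) ^ 3 = Real.exp 2 from by rw [← Real.exp_nat_mul]; norm_num,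
      show (2:ℝ) ^ 3 = 8 from by norm_num]
    exact he
  exact lt_of_pow_lt_pow_left₀ 3 (by norm_num) h3

lemma log_two_pi_gt : (11:ℝ) / 6 < Real.log (2 * π) := by
  rw [Real.lt_log_iff_exp_lt (by positivity)]
  have h6 : Real.exp (11/6) ^ 6 = Real.exp 11 := by
    rw [← Real.exp_nat_mul]; norm_num
  have he : Real.exp 11 < 6.283184 ^ 6 := by
    have := Real.exp_one_lt_d9
    calc Real.exp 11 = Real.exp 1 ^ 11 := by rw [← Real.exp_nat_mul]; norm_num
    _ < 2.7182818286 ^ 11 := by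
        exact pow_lt_pow_left₀ this (Real.exp_pos 1).le (by norm_num)
    _ < 6.283184 ^ 6 := by norm_num
  have hpi : (6.283184 : ℝ) ≤ 2 * π := by
    have := Real.pi_gt_d6; linarith
  have : Real.exp (11/6) ^ 6 < (2 * π) ^ 6 := by
    rw [h6]
    exact he.trans_le (pow_le_pow_left₀ (by norm_num) hpi 6)
  exact lt_of_pow_lt_pow_left₀ 6 (by positivity) this

/-- **Hummel's inequality**: `11/12 < r_n + (1/2) ln (2π) < 1` for every `n ≥ 2`. -/
theorem hummel_inequality (n : ℕ) (hn : 2 ≤ n) :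
    11 / 12 < stirlingError n + (1 / 2) * Real.log (2 * π) ∧
      stirlingError n + (1 / 2) * Real.log (2 * π) < 1 := by
  have hn1 : 1 ≤ n := le_trans one_le_two hn
  rw [stirlingError_eq_log_stirlingSeq n hn1]
  constructor
  · have h1 : Real.log (Real.sqrt π) ≤ Real.log (Stirling.stirlingSeq n) :=
      Real.log_le_log (Real.sqrt_pos.mpr Real.pi_pos) (sqrt_pi_le_stirlingSeq n hn1)
    rw [Real.log_sqrt Real.pi_pos.le] at h1
    have h2 := log_two_pi_gt
    rw [Real.log_mul two_ne_zero Real.pi_pos.ne'] at h2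
    linarith
  · -- stirlingSeq n ≤ stirlingSeq 2
    have hmono : Stirling.stirlingSeq n ≤ Stirling.stirlingSeq 2 := by
      obtain ⟨m, rfl⟩ := Nat.exists_eq_add_of_le hn
      have h := Stirling.stirlingSeq'_antitone (Nat.le_add_right 1 m)
      rw [show 2 + m = 1 + m + 1 from by omega]
      exact h
    have hpos : 0 < Stirling.stirlingSeq n := by
      obtain ⟨m, rfl⟩ := Nat.exists_eq_add_of_le hn1
      simpa [Nat.add_comm] using Stirling.stirlingSeq'_pos m
    have hlog : Real.log (Stirling.stirlingSeq n) ≤ Real.log (Stirling.stirlingSeq 2) :=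
      Real.log_le_log hpos hmono
    have h2 : Real.log (Stirling.stirlingSeq 2) = 2 - 2 * Real.log 2 := by
      rw [Stirling.log_stirlingSeq_formula,
        show ((2:ℕ)! : ℝ) = 2 from by norm_num [Nat.factorial]]
      push_cast
      rw [Real.log_div two_ne_zero (Real.exp_pos 1).ne', Real.log_exp,
        show (2:ℝ) * 2 = 2 ^ 2 from by norm_num, Real.log_pow]
      push_cast
      ring
    have := log_two_gt
    linarith
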